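/- For the simple random walk on the cycle graph with $n+1$ nodes ($n \geq 2$) started at any node, the expected cover time equals $\frac{n(n+1)}{2}$. -/

import Mathlib

open Finset
open scoped Classical

/-- Probability that a Markov chain with transition matrix `P` started at `s`
produces the trajectory prefix `w 0, w 1, ..., w k`. -/
noncomputable def prefixProb {V : Type*} (P : V → V → ℝ) (s : V) {k : ℕ}
    (w : Fin (k + 1) → V) : ℝ :=
  (if w 0 = s then (1 : ℝ) else 0) * ∏ t : Fin k, P (w t.castSucc) (w t.succ)

/-- `P(T_C > k)`: the probability that the first `k+1` states of the chain do not
visit every node. -/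
noncomputable def coverSurvival {V : Type*} [Fintype V] (P : V → V → ℝ) (s : V) (k : ℕ) : ℝ :=
  ∑ w : Fin (k + 1) → V, if Function.Surjective w then 0 else prefixProb P s w

/-- Expected cover time `E[T_C] = ∑_{k ≥ 0} P(T_C > k)`. -/
noncomputable def expCoverTime {V : Type*} [Fintype V] (P : V → V → ℝ) (s : V) : ℝ :=
  ∑' k : ℕ, coverSurvival P s k

/-- Transition matrix of the simple random walk on the cycle with `n + 1` nodes:
move to each of the two neighbours with probability `1/2`. -/
noncomputable def cycleRW (n : ℕ) (i j : ZMod (n + 1)) : ℝ :=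
  if j = i + 1 ∨ j = i - 1 then 1 / 2 else 0

/-!
The visited set is always an arc containing the walker, so the chain (position, visited set)
collapses to the pair `(i, j)` of numbers of visited nodes left and right of the walker; it moves to
`(i + 1, j - 1)` or `(i - 1, j + 1)` with probability `1/2` each until `i + j = n`. Survival
probabilities of this killed walk decay geometrically (`n + 1` steps to the right always finish),
so the expected absorption time is the bounded solution `F` of
`F = 1 + (F ∘ right + F ∘ left) / 2`, namely `F (i, j) = i j + (n (n + 1) - s (s + 1)) / 2` with
`s = i + j`; at `(0, 0)` it is `n (n + 1) / 2`.
-/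

open Filter Topology Function

section KilledWalk

variable {S : Type*} (f g : S → S) (D : Set S)

/-- Probability that the walk jumping from `p` to `f p` or `g p` with probability `1/2` each,
killed on entering `D`, is still alive at time `k`. -/
noncomputable def killedSurvival : ℕ → S → ℝ
  | 0, p => if p ∈ D then 0 else 1
  | k + 1, p => if p ∈ D then 0 else (killedSurvival k (f p) + killedSurvival k (g p)) / 2

variable {f g D}

lemma killedSurvival_of_mem {p : S} (hp : p ∈ D) (k : ℕ) : killedSurvival f g D k p = 0 := by
  cases k <;> simp [killedSurvival, hp]

lemma killedSurvival_zero_of_notMem {p : S} (hp : p ∉ D) : killedSurvival f g D 0 p = 1 := by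
  simp [killedSurvival, hp]

lemma killedSurvival_succ_of_notMem {p : S} (hp : p ∉ D) (k : ℕ) :
    killedSurvival f g D (k + 1) p
      = (killedSurvival f g D k (f p) + killedSurvival f g D k (g p)) / 2 := by
  simp [killedSurvival, hp]

lemma killedSurvival_mem_Icc (k : ℕ) (p : S) : killedSurvival f g D k p ∈ Set.Icc 0 1 := by
  induction k generalizing p with
  | zero => by_cases hp : p ∈ D <;> simp [killedSurvival, hp]
  | succ k ih =>
    by_cases hp : p ∈ D
    · simp [killedSurvival_of_mem hp]
    · rw [killedSurvival_succ_of_notMem hp]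
      obtain ⟨hf₀, hf₁⟩ := ih (f p)
      obtain ⟨hg₀, hg₁⟩ := ih (g p)
      constructor <;> linarith

lemma killedSurvival_nonneg (k : ℕ) (p : S) : 0 ≤ killedSurvival f g D k p :=
  (killedSurvival_mem_Icc k p).1

lemma killedSurvival_succ_le (k : ℕ) (p : S) :
    killedSurvival f g D (k + 1) p ≤ killedSurvival f g D k p := by
  induction k generalizing p with
  | zero =>
    by_cases hp : p ∈ D
    · simp [killedSurvival_of_mem hp]
    · exact killedSurvival_zero_of_notMem hp ▸ (killedSurvival_mem_Icc 1 p).2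
  | succ k ih =>
    by_cases hp : p ∈ D
    · simp [killedSurvival_of_mem hp]
    · rw [killedSurvival_succ_of_notMem hp, killedSurvival_succ_of_notMem hp]
      linarith [ih (f p), ih (g p)]

lemma killedSurvival_antitone (p : S) : Antitone fun k ↦ killedSurvival f g D k p :=
  antitone_nat_of_succ_le fun k ↦ killedSurvival_succ_le k p

/-- Following `f` for `m` steps has probability `(1/2)^m`; every other path is bounded by `c`. -/
lemma killedSurvival_add_le {k : ℕ} {c : ℝ} (hc : ∀ q, killedSurvival f g D k q ≤ c)
    (m : ℕ) (p : S) :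
    killedSurvival f g D (k + m) p
      ≤ (1 - (1 / 2) ^ m) * c + (1 / 2) ^ m * killedSurvival f g D k (f^[m] p) := by
  induction m generalizing p with
  | zero => simp
  | succ m ih =>
    have hc₀ : 0 ≤ c := (killedSurvival_nonneg k p).trans (hc p)
    have hpow : ((1 : ℝ) / 2) ^ (m + 1) ≤ 1 := pow_le_one₀ (by norm_num) (by norm_num)
    by_cases hp : p ∈ D
    · rw [killedSurvival_of_mem hp]
      exact add_nonneg (mul_nonneg (sub_nonneg.2 hpow) hc₀)
        (mul_nonneg (by positivity) (killedSurvival_nonneg _ _))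
    · rw [← add_assoc, killedSurvival_succ_of_notMem hp, iterate_succ_apply, pow_succ]
      have hg : killedSurvival f g D (k + m) (g p) ≤ c :=
        (killedSurvival_antitone (g p) (Nat.le_add_right k m)).trans (hc (g p))
      linarith [ih (f p)]

lemma killedSurvival_mul_le (g : S → S) {N : ℕ} (hN : ∀ p, f^[N] p ∈ D) (j : ℕ) (p : S) :
    killedSurvival f g D (j * N) p ≤ (1 - (1 / 2) ^ N) ^ j := by
  induction j generalizing p with
  | zero => simpa using (killedSurvival_mem_Icc 0 p).2
  | succ j ih =>
    rw [add_one_mul, pow_succ]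
    simpa [killedSurvival_of_mem (hN p), mul_comm] using killedSurvival_add_le ih N p

lemma tendsto_killedSurvival (g : S → S) {N : ℕ} (hN₀ : N ≠ 0) (hN : ∀ p, f^[N] p ∈ D) (p : S) :
    Tendsto (fun k ↦ killedSurvival f g D k p) atTop (𝓝 0) := by
  have hr : Tendsto (fun k : ℕ ↦ (1 - (1 / 2 : ℝ) ^ N) ^ (k / N)) atTop (𝓝 0) :=
    (tendsto_pow_atTop_nhds_zero_of_lt_one (sub_nonneg.2 (pow_le_one₀ (by norm_num) (by norm_num)))
      (sub_lt_self _ (by positivity))).comp (Nat.tendsto_div_const_atTop hN₀)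
  refine tendsto_of_tendsto_of_tendsto_of_le_of_le tendsto_const_nhds hr
    (killedSurvival_nonneg · p) fun k ↦ ?_
  exact (killedSurvival_antitone p (Nat.div_mul_le_self k N)).trans (killedSurvival_mul_le g hN _ p)

variable {F : S → ℝ} {M : ℝ}

lemma abs_sub_sum_killedSurvival_le (hD : ∀ p ∈ D, F p = 0)
    (hstep : ∀ p ∉ D, F p = 1 + (F (f p) + F (g p)) / 2) (hM : ∀ p, |F p| ≤ M) (K : ℕ) (p : S) :
    |F p - ∑ k ∈ range K, killedSurvival f g D k p| ≤ M * killedSurvival f g D K p := by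
  induction K generalizing p with
  | zero =>
    by_cases hp : p ∈ D
    · simp [hD p hp, killedSurvival_of_mem hp]
    · simpa [killedSurvival_zero_of_notMem hp] using hM p
  | succ K ih =>
    by_cases hp : p ∈ D
    · simp [hD p hp, killedSurvival_of_mem hp]
    have hsum : ∑ k ∈ range (K + 1), killedSurvival f g D k p
        = 1 + (∑ k ∈ range K, killedSurvival f g D k (f p)
          + ∑ k ∈ range K, killedSurvival f g D k (g p)) / 2 := by
      simp only [sum_range_succ', killedSurvival_succ_of_notMem hp,
        killedSurvival_zero_of_notMem hp, ← sum_div, sum_add_distrib]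
      ring
    have hf := abs_le.mp (ih (f p))
    have hg := abs_le.mp (ih (g p))
    rw [hsum, hstep p hp, killedSurvival_succ_of_notMem hp, abs_le]
    constructor <;> linarith

theorem hasSum_killedSurvival {N : ℕ} (hN₀ : N ≠ 0) (hN : ∀ p, f^[N] p ∈ D)
    (hD : ∀ p ∈ D, F p = 0) (hstep : ∀ p ∉ D, F p = 1 + (F (f p) + F (g p)) / 2)
    (hM : ∀ p, |F p| ≤ M) (p : S) :
    HasSum (fun k ↦ killedSurvival f g D k p) (F p) := by
  rw [hasSum_iff_tendsto_nat_of_nonneg (killedSurvival_nonneg · p),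
    tendsto_iff_norm_sub_tendsto_zero]
  refine squeeze_zero (fun _ ↦ norm_nonneg _) (fun K ↦ ?_)
    (by simpa using (tendsto_killedSurvival g hN₀ hN p).const_mul M)
  rw [Real.norm_eq_abs, abs_sub_comm]
  exact abs_sub_sum_killedSurvival_le hD hstep hM K p

end KilledWalk

section Cover

lemma image_cons_univ {V : Type*} [DecidableEq V] {k : ℕ} (y : V) (w : Fin (k + 1) → V) :
    univ.image (Fin.cons y w : Fin (k + 2) → V) = insert y (univ.image w) := by
  apply coe_injective
  simp [coe_image, Set.image_univ, Fin.range_cons]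

variable {V : Type*} [Fintype V] [DecidableEq V]

/-- Probability that the chain started at `x`, with the nodes of `A` already visited, has not
visited every node by time `k`. -/
noncomputable def uncoveredProb (P : V → V → ℝ) : ℕ → V → Finset V → ℝ
  | 0, _, A => if A = univ then 0 else 1
  | k + 1, x, A => ∑ y, P x y * uncoveredProb P k y (insert y A)

lemma uncoveredProb_univ (P : V → V → ℝ) (k : ℕ) (x : V) : uncoveredProb P k x univ = 0 := by
  induction k generalizing x <;> simp [uncoveredProb, *]

lemma prefixProb_cons (P : V → V → ℝ) (x y : V) {k : ℕ} (w : Fin (k + 1) → V) :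
    prefixProb P x (Fin.cons y w : Fin (k + 2) → V)
      = if y = x then ∑ z, P x z * prefixProb P z w else 0 := by
  have hsum : ∑ z, P x z * prefixProb P z w
      = P x (w 0) * ∏ t : Fin k, P (w t.castSucc) (w t.succ) := by
    simp only [prefixProb, ← mul_assoc, mul_ite, mul_one, mul_zero, ← sum_mul,
      sum_ite_eq, mem_univ, if_true]
  rw [hsum, prefixProb, Fin.prod_univ_succ]
  simp only [Fin.cons_zero, ← Fin.succ_castSucc, Fin.cons_succ, Fin.castSucc_zero]
  split_ifs with h
  · rw [h, one_mul]
  · rw [zero_mul]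

lemma sum_prefixProb_not_cover (P : V → V → ℝ) (k : ℕ) (x : V) (A : Finset V) :
    ∑ w : Fin (k + 1) → V, (if A ∪ univ.image w = univ then 0 else prefixProb P x w)
      = uncoveredProb P k x (insert x A) := by
  induction k generalizing x A with
  | zero =>
    rw [← (Equiv.funUnique (Fin 1) V).symm.sum_comp, Fintype.sum_eq_single x fun y hy ↦ by
      simp [prefixProb, hy]]
    simp [prefixProb, uncoveredProb, union_comm A]
  | succ k ih =>
    rw [← (Fin.consEquiv fun _ ↦ V).sum_comp, Fintype.sum_prod_type]
    simp only [Fin.consEquiv, Equiv.coe_fn_mk, image_cons_univ, prefixProb_cons]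
    rw [Fintype.sum_eq_single x fun y hy ↦ by simp [hy]]
    simp only [if_true, union_insert, ← insert_union, uncoveredProb, ← ih, mul_sum, mul_ite,
      mul_zero, ite_zero_sum]
    exact sum_comm

lemma coverSurvival_eq_uncoveredProb (P : V → V → ℝ) (s : V) (k : ℕ) :
    coverSurvival P s k = uncoveredProb P k s {s} := by
  rw [← insert_empty, ← sum_prefixProb_not_cover, coverSurvival]
  refine sum_congr rfl fun w _ ↦ ?_
  congr 1
  simp [eq_univ_iff_forall, Function.Surjective]

end Cover

namespace CycleCover

-- Truncated subtraction makes a step off an end of the visited arc leave that count at `0`.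

def stepRight (p : ℕ × ℕ) : ℕ × ℕ := (p.1 + 1, p.2 - 1)

def stepLeft (p : ℕ × ℕ) : ℕ × ℕ := (p.1 - 1, p.2 + 1)

def covered (n : ℕ) : Set (ℕ × ℕ) := {p | n ≤ p.1 + p.2}

/-- `(i + 1) (j + 1)` steps to leave the visited arc (gambler's ruin), then the value at an end
of an arc one node longer. -/
noncomputable def potential (n : ℕ) (p : ℕ × ℕ) : ℝ :=
  if n ≤ p.1 + p.2 then 0
  else p.1 * p.2 + ((n : ℝ) * (n + 1) - (p.1 + p.2 : ℝ) * (p.1 + p.2 + 1)) / 2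

lemma stepRight_iterate_fst (m : ℕ) (p : ℕ × ℕ) : (stepRight^[m] p).1 = p.1 + m := by
  induction m generalizing p with
  | zero => rfl
  | succ m ih => rw [iterate_succ_apply, ih, stepRight, add_right_comm, add_assoc]

lemma stepRight_iterate_mem_covered {n m : ℕ} (hm : n ≤ m) (p : ℕ × ℕ) :
    stepRight^[m] p ∈ covered n := by
  simp only [covered, Set.mem_ofPred_eq, stepRight_iterate_fst]
  omega

lemma potential_step {n : ℕ} {p : ℕ × ℕ} (hp : p ∉ covered n) :
    potential n p = 1 + (potential n (stepRight p) + potential n (stepLeft p)) / 2 := by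
  obtain ⟨i, j⟩ := p
  obtain ⟨d, rfl⟩ := Nat.exists_eq_add_of_lt (not_le.mp hp)
  rcases i with _ | i <;> rcases j with _ | j <;> rcases d with _ | d <;>
    simp only [potential, stepRight, stepLeft, Nat.add_sub_cancel, Nat.zero_sub] <;>
    split_ifs <;> first | omega | (push_cast; ring)

lemma abs_potential_le (n : ℕ) (p : ℕ × ℕ) : |potential n p| ≤ 2 * n ^ 2 := by
  unfold potential
  split_ifs with h
  · simp
  · have hs : (p.1 + p.2 : ℝ) + 1 ≤ n := by exact_mod_cast (not_le.mp h)
    have hi : (0 : ℝ) ≤ p.1 := p.1.cast_nonneg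
    have hj : (0 : ℝ) ≤ p.2 := p.2.cast_nonneg
    rw [abs_le]
    constructor <;> nlinarith

theorem hasSum_killedSurvival_start (n : ℕ) :
    HasSum (fun k ↦ killedSurvival stepRight stepLeft (covered n) k (0, 0))
      ((n : ℝ) * (n + 1) / 2) := by
  have h₀ : potential n (0, 0) = (n : ℝ) * (n + 1) / 2 := by
    unfold potential
    split_ifs with h <;> simp_all
  rw [← h₀]
  exact hasSum_killedSurvival n.succ_ne_zero (stepRight_iterate_mem_covered n.le_succ)
    (fun p hp ↦ if_pos hp) (fun _ ↦ potential_step) (abs_potential_le n) _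

variable {n : ℕ}

lemma add_one_ne_sub_one (hn : 2 ≤ n) (x : ZMod (n + 1)) : x + 1 ≠ x - 1 := by
  intro h
  have h2 : ((2 : ℕ) : ZMod (n + 1)) = 0 := by
    push_cast
    linear_combination h
  have := Nat.le_of_dvd two_pos ((ZMod.natCast_eq_zero_iff _ _).mp h2)
  omega

lemma sum_cycleRW_mul (hn : 2 ≤ n) (x : ZMod (n + 1)) (φ : ZMod (n + 1) → ℝ) :
    ∑ y, cycleRW n x y * φ y = (φ (x + 1) + φ (x - 1)) / 2 := by
  rw [Fintype.sum_eq_add (x + 1) (x - 1) (add_one_ne_sub_one hn x) fun y hy ↦ by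
    simp [cycleRW, hy]]
  simp [cycleRW, add_one_ne_sub_one hn x, (add_one_ne_sub_one hn x).symm]
  ring

noncomputable def arc (x : ZMod (n + 1)) (p : ℕ × ℕ) : Finset (ZMod (n + 1)) :=
  (Icc (-(p.1 : ℤ)) p.2).image fun t : ℤ ↦ x + (t : ZMod (n + 1))

lemma mem_arc {x z : ZMod (n + 1)} {p : ℕ × ℕ} :
    z ∈ arc x p ↔ ∃ t : ℤ, -(p.1 : ℤ) ≤ t ∧ t ≤ p.2 ∧ x + t = z := by
  simp only [arc, mem_image, mem_Icc, and_assoc]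

lemma arc_zero (x : ZMod (n + 1)) : arc x (0, 0) = {x} := by
  simp [arc]

lemma arc_eq_univ_iff {x : ZMod (n + 1)} {p : ℕ × ℕ} : arc x p = univ ↔ p ∈ covered n := by
  constructor
  · intro h
    have hcard : (arc x p).card ≤ (Icc (-(p.1 : ℤ)) p.2).card := card_image_le
    rw [h, card_univ, ZMod.card, Int.card_Icc] at hcard
    simp only [covered, Set.mem_ofPred_eq]
    omega
  · intro hp
    refine eq_univ_iff_forall.mpr fun z ↦ mem_arc.mpr
      ⟨((z - x + (p.1 : ZMod (n + 1))).val : ℤ) - p.1, by omega, ?_,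
        by push_cast [ZMod.natCast_zmod_val]; ring⟩
    have := ZMod.val_lt (z - x + (p.1 : ZMod (n + 1)))
    simp only [covered, Set.mem_ofPred_eq] at hp
    omega

lemma insert_add_one_arc (x : ZMod (n + 1)) (p : ℕ × ℕ) :
    insert (x + 1) (arc x p) = arc (x + 1) (stepRight p) := by
  ext z
  simp only [mem_insert, mem_arc, stepRight]
  constructor
  · rintro (rfl | ⟨t, h₁, h₂, rfl⟩)
    · exact ⟨0, by omega, by omega, by simp⟩
    · exact ⟨t - 1, by push_cast; omega, by omega, by push_cast; ring⟩
  · rintro ⟨t, h₁, h₂, rfl⟩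
    by_cases ht : t + 1 ≤ p.2
    · exact Or.inr ⟨t + 1, by omega, ht, by push_cast; ring⟩
    · obtain rfl : t = 0 := by omega
      simp

lemma insert_sub_one_arc (x : ZMod (n + 1)) (p : ℕ × ℕ) :
    insert (x - 1) (arc x p) = arc (x - 1) (stepLeft p) := by
  ext z
  simp only [mem_insert, mem_arc, stepLeft]
  constructor
  · rintro (rfl | ⟨t, h₁, h₂, rfl⟩)
    · exact ⟨0, by omega, by omega, by simp⟩
    · exact ⟨t + 1, by omega, by push_cast; omega, by push_cast; ring⟩
  · rintro ⟨t, h₁, h₂, rfl⟩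
    by_cases ht : -(p.1 : ℤ) ≤ t - 1
    · exact Or.inr ⟨t - 1, ht, by omega, by push_cast; ring⟩
    · obtain rfl : t = 0 := by omega
      simp

lemma uncoveredProb_arc (hn : 2 ≤ n) (k : ℕ) (x : ZMod (n + 1)) (p : ℕ × ℕ) :
    uncoveredProb (cycleRW n) k x (arc x p)
      = killedSurvival stepRight stepLeft (covered n) k p := by
  induction k generalizing x p with
  | zero => simp [uncoveredProb, killedSurvival, arc_eq_univ_iff]
  | succ k ih =>
    by_cases hp : p ∈ covered n
    · rw [arc_eq_univ_iff.mpr hp, uncoveredProb_univ, killedSurvival_of_mem hp]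
    · rw [uncoveredProb, sum_cycleRW_mul hn, insert_add_one_arc, insert_sub_one_arc, ih, ih,
        killedSurvival_succ_of_notMem hp]

end CycleCover

/-- the expected cover time of the simple random walk on the cycle with
`n + 1` nodes (`n ≥ 2`), started at any node, equals `n(n+1)/2`. -/
theorem cycle_rw_cover (n : ℕ) (hn : 2 ≤ n) (s : ZMod (n + 1)) :
    expCoverTime (cycleRW n) s = (n : ℝ) * (n + 1) / 2 := by
  have hsurv (k : ℕ) : coverSurvival (cycleRW n) s k =
      killedSurvival CycleCover.stepRight CycleCover.stepLeft (CycleCover.covered n) k (0, 0) := by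
    rw [coverSurvival_eq_uncoveredProb, ← CycleCover.arc_zero, CycleCover.uncoveredProb_arc hn]
  rw [expCoverTime, tsum_congr hsurv, (CycleCover.hasSum_killedSurvival_start n).tsum_eq]
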